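/- The map c₁ assigning to g,h ∈ G the boundary density ((n²−1)/2)·ν_∞·X^A, where ν ∈ Γ(E[−n]) is defined by τ − σ = −(1/(2n))σ^{n+1}ν + O(ρ^{n+2}) (σ, τ the 1-densities of g, h), is a cocycle: c₁(h,g) = −c₁(g,h) and c₁(g,k) = c₁(g,h) + c₁(h,k) for all g,h,k ∈ G. -/
import Mathlib


open Set

open Filter Topology in
/-- A continuous function on `U` vanishing on a subset `S ⊆ U` vanishes at any
point of `U` in the closure of `S`. -/
lemma vanish_at_closure {E : Type*} [TopologicalSpace E] {U S : Set E} {f : E → ℝ}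
    (hf : ContinuousOn f U) (hS : S ⊆ U) (h0 : ∀ y ∈ S, f y = 0)
    {x : E} (hx : x ∈ U) (hcl : x ∈ closure S) : f x = 0 := by
  have h1 : ContinuousWithinAt f S x := (hf x hx).mono hS
  have hne : (𝓝[S] x).NeBot := mem_closure_iff_nhdsWithin_neBot.mp hcl
  have h2 : Filter.Tendsto f (𝓝[S] x) (𝓝 0) := by
    refine Filter.Tendsto.congr' ?_ tendsto_const_nhds
    filter_upwards [self_mem_nhdsWithin] with y hy
    exact (h0 y hy).symm
  exact tendsto_nhds_unique h1 h2

structure IsDefiningFunction {E : Type*} [NormedAddCommGroup E] [NormedSpace ℝ E]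
    (U bdry : Set E) (ρ : E → ℝ) : Prop where
  smooth : ContDiffOn ℝ (⊤ : ℕ∞) ρ U
  nonneg : ∀ x ∈ U, 0 ≤ ρ x
  zero_iff : ∀ x ∈ U, (ρ x = 0 ↔ x ∈ bdry)
  deriv_ne : ∀ x ∈ U ∩ bdry, fderivWithin ℝ ρ U x ≠ 0

/-- the map `c₁` assigning to `g,h ∈ G` the boundary value
`((n²−1)/2)·ν_∞` (the coefficient of the tractor `X^A`), where `ν` is defined by
`τ − σ = −(1/(2n)) σ^{n+1} ν + O(ρ^{n+2})` for the defining densities `σ, τ` of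
`g, h`, is a cocycle: `c₁(h,g) = −c₁(g,h)` and `c₁(g,k) = c₁(g,h) + c₁(h,k)` on
the boundary.  The densities are represented (in the trivialization determined by
`ρ`) by functions `σ = wσ·ρ` etc.\ with `wσ` smooth and positive up to the
boundary, as appropriate for defining densities of metrics in the class `G`. -/
theorem c1_is_a_cocycle
    {E : Type*} [NormedAddCommGroup E] [NormedSpace ℝ E]
    (U bdry : Set E) (ρ : E → ℝ) (hρ : IsDefiningFunction U bdry ρ)
    (n : ℕ) (hn : 3 ≤ n)
    (σ τ κ wσ wτ wκ : E → ℝ)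
    (hwσ : ContDiffOn ℝ (⊤ : ℕ∞) wσ U) (hwσpos : ∀ x ∈ U, 0 < wσ x)
    (hwτ : ContDiffOn ℝ (⊤ : ℕ∞) wτ U) (hwτpos : ∀ x ∈ U, 0 < wτ x)
    (hwκ : ContDiffOn ℝ (⊤ : ℕ∞) wκ U) (hwκpos : ∀ x ∈ U, 0 < wκ x)
    (hσ : ∀ x ∈ U, σ x = wσ x * ρ x)
    (hτ : ∀ x ∈ U, τ x = wτ x * ρ x)
    (hκ : ∀ x ∈ U, κ x = wκ x * ρ x)
    -- the functions ν for the various pairs of metrics, together with the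
    -- remainder terms expressing the `O(ρ^{n+2})` conditions
    (νgh νhg νgk νhk rgh rhg rgk rhk : E → ℝ)
    (hνgh : ContDiffOn ℝ (⊤ : ℕ∞) νgh U) (hrgh : ContDiffOn ℝ (⊤ : ℕ∞) rgh U)
    (hνhg : ContDiffOn ℝ (⊤ : ℕ∞) νhg U) (hrhg : ContDiffOn ℝ (⊤ : ℕ∞) rhg U)
    (hνgk : ContDiffOn ℝ (⊤ : ℕ∞) νgk U) (hrgk : ContDiffOn ℝ (⊤ : ℕ∞) rgk U)
    (hνhk : ContDiffOn ℝ (⊤ : ℕ∞) νhk U) (hrhk : ContDiffOn ℝ (⊤ : ℕ∞) rhk U)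
    (heqgh : ∀ x ∈ U, τ x - σ x =
      -(1 / (2 * n)) * (σ x) ^ (n + 1) * νgh x + (ρ x) ^ (n + 2) * rgh x)
    (heqhg : ∀ x ∈ U, σ x - τ x =
      -(1 / (2 * n)) * (τ x) ^ (n + 1) * νhg x + (ρ x) ^ (n + 2) * rhg x)
    (heqgk : ∀ x ∈ U, κ x - σ x =
      -(1 / (2 * n)) * (σ x) ^ (n + 1) * νgk x + (ρ x) ^ (n + 2) * rgk x)
    (heqhk : ∀ x ∈ U, κ x - τ x =
      -(1 / (2 * n)) * (τ x) ^ (n + 1) * νhk x + (ρ x) ^ (n + 2) * rhk x)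
    -- boundary points are approached from the interior
    (hacc : ∀ x ∈ U ∩ bdry, x ∈ closure (U \ bdry)) :
    -- the cocycle identities for `c₁ = ((n²−1)/2)·ν_∞`
    (∀ x ∈ U ∩ bdry,
      ((n ^ 2 - 1 : ℝ) / 2) * νhg x = -(((n ^ 2 - 1 : ℝ) / 2) * νgh x)) ∧
    (∀ x ∈ U ∩ bdry,
      ((n ^ 2 - 1 : ℝ) / 2) * νgk x =
        ((n ^ 2 - 1 : ℝ) / 2) * νgh x + ((n ^ 2 - 1 : ℝ) / 2) * νhk x) := by
  have hn0 : (n : ℝ) ≠ 0 := by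
    have : (0:ℝ) < n := by exact_mod_cast Nat.lt_of_lt_of_le (by norm_num) hn
    linarith
  have hc0 : (1 / (2 * (n:ℝ))) ≠ 0 := by positivity
  -- continuity of all ingredients on U
  have cρ : ContinuousOn ρ U := hρ.smooth.continuousOn
  have cwσ : ContinuousOn wσ U := hwσ.continuousOn
  have cwτ : ContinuousOn wτ U := hwτ.continuousOn
  have cνgh : ContinuousOn νgh U := hνgh.continuousOn
  have cνhg : ContinuousOn νhg U := hνhg.continuousOn
  have cνgk : ContinuousOn νgk U := hνgk.continuousOn
  have cνhk : ContinuousOn νhk U := hνhk.continuousOn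
  have crgh : ContinuousOn rgh U := hrgh.continuousOn
  have crhg : ContinuousOn rhg U := hrhg.continuousOn
  have crgk : ContinuousOn rgk U := hrgk.continuousOn
  have crhk : ContinuousOn rhk U := hrhk.continuousOn
  -- at interior points ρ ≠ 0
  have hρne : ∀ y ∈ U \ bdry, ρ y ≠ 0 := by
    intro y hy h
    exact hy.2 ((hρ.zero_iff y hy.1).mp h)
  have hUdiff : (U \ bdry : Set E) ⊆ U := diff_subset
  -- the three auxiliary continuous functions vanishing on U \ bdry
  set f₁ : E → ℝ := fun y =>
    -(1 / (2 * n)) * ((wσ y) ^ (n + 1) * νgh y + (wτ y) ^ (n + 1) * νhg y)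
      + ρ y * (rgh y + rhg y) with hf₁def
  set f₂ : E → ℝ := fun y =>
    -(1 / (2 * n)) * ((wσ y) ^ (n + 1) * (νgk y - νgh y) - (wτ y) ^ (n + 1) * νhk y)
      + ρ y * (rgk y - rgh y - rhk y) with hf₂def
  set f₃ : E → ℝ := fun y =>
    wτ y - wσ y - (ρ y) ^ n *
      (-(1 / (2 * n)) * (wσ y) ^ (n + 1) * νgh y + ρ y * rgh y) with hf₃def
  have cf₁ : ContinuousOn f₁ U := by
    apply ContinuousOn.add
    · exact ContinuousOn.mul continuousOn_const
        (((cwσ.pow _).mul cνgh).add ((cwτ.pow _).mul cνhg))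
    · exact cρ.mul (crgh.add crhg)
  have cf₂ : ContinuousOn f₂ U := by
    apply ContinuousOn.add
    · exact ContinuousOn.mul continuousOn_const
        (((cwσ.pow _).mul (cνgk.sub cνgh)).sub ((cwτ.pow _).mul cνhk))
    · exact cρ.mul ((crgk.sub crgh).sub crhk)
  have cf₃ : ContinuousOn f₃ U := by
    apply ContinuousOn.sub (cwτ.sub cwσ)
    exact (cρ.pow _).mul
      (((continuousOn_const.mul (cwσ.pow _)).mul cνgh).add (cρ.mul crgh))
  -- f₁, f₂, f₃ vanish on U \ bdry
  have hf₁0 : ∀ y ∈ U \ bdry, f₁ y = 0 := by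
    intro y hy
    have e1 := heqgh y hy.1
    have e2 := heqhg y hy.1
    rw [hσ y hy.1, hτ y hy.1] at e1 e2
    have key : f₁ y * (ρ y) ^ (n + 1) = 0 := by
      simp only [hf₁def]
      linear_combination -e1 - e2
    rcases mul_eq_zero.mp key with h | h
    · exact h
    · exact absurd (pow_eq_zero_iff (by omega)).mp (fun H => hρne y hy (H h))
  have hf₂0 : ∀ y ∈ U \ bdry, f₂ y = 0 := by
    intro y hy
    have e1 := heqgh y hy.1
    have e3 := heqgk y hy.1
    have e4 := heqhk y hy.1
    rw [hσ y hy.1, hτ y hy.1] at e1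
    rw [hσ y hy.1, hκ y hy.1] at e3
    rw [hτ y hy.1, hκ y hy.1] at e4
    have key : f₂ y * (ρ y) ^ (n + 1) = 0 := by
      simp only [hf₂def]
      linear_combination e1 - e3 + e4
    rcases mul_eq_zero.mp key with h | h
    · exact h
    · exact absurd (pow_eq_zero_iff (by omega)).mp (fun H => hρne y hy (H h))
  have hf₃0 : ∀ y ∈ U \ bdry, f₃ y = 0 := by
    intro y hy
    have e1 := heqgh y hy.1
    rw [hσ y hy.1, hτ y hy.1] at e1
    have key : f₃ y * ρ y = 0 := by
      simp only [hf₃def]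
      linear_combination e1
    rcases mul_eq_zero.mp key with h | h
    · exact h
    · exact absurd h (hρne y hy)
  -- pass to the boundary
  have hbd : ∀ x ∈ U ∩ bdry, f₁ x = 0 ∧ f₂ x = 0 ∧ f₃ x = 0 := by
    intro x hx
    exact ⟨vanish_at_closure cf₁ hUdiff hf₁0 hx.1 (hacc x hx),
      vanish_at_closure cf₂ hUdiff hf₂0 hx.1 (hacc x hx),
      vanish_at_closure cf₃ hUdiff hf₃0 hx.1 (hacc x hx)⟩
  constructor
  · intro x hx
    obtain ⟨h1, _, h3⟩ := hbd x hx
    have hρ0 : ρ x = 0 := (hρ.zero_iff x hx.1).mpr hx.2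
    have hw : wτ x = wσ x := by
      have := h3
      simp only [hf₃def, hρ0] at this
      rw [zero_pow (by omega)] at this
      linarith [this]
    have hwpos : 0 < wσ x := hwσpos x hx.1
    have hsum : (wσ x) ^ (n + 1) * νgh x + (wσ x) ^ (n + 1) * νhg x = 0 := by
      have := h1
      simp only [hf₁def, hρ0, hw] at this
      have h' : -(1 / (2 * (n:ℝ))) *
          ((wσ x) ^ (n + 1) * νgh x + (wσ x) ^ (n + 1) * νhg x) = 0 := by
        linarith [this]
      have := mul_eq_zero.mp h'
      rcases this with h | h
      · exact absurd h (by simpa using hc0)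
      · exact h
    have hpow : (wσ x) ^ (n + 1) ≠ 0 := by positivity
    have : νhg x = -(νgh x) := by
      have : (wσ x) ^ (n + 1) * (νgh x + νhg x) = 0 := by linarith [hsum]
      rcases mul_eq_zero.mp this with h | h
      · exact absurd h hpow
      · linarith
    rw [this]; ring
  · intro x hx
    obtain ⟨_, h2, h3⟩ := hbd x hx
    have hρ0 : ρ x = 0 := (hρ.zero_iff x hx.1).mpr hx.2
    have hw : wτ x = wσ x := by
      have := h3
      simp only [hf₃def, hρ0] at this
      rw [zero_pow (by omega)] at this
      linarith [this]
    have hpow : (wσ x) ^ (n + 1) ≠ 0 := by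
      have := hwσpos x hx.1; positivity
    have hsum : (wσ x) ^ (n + 1) * (νgk x - νgh x) - (wσ x) ^ (n + 1) * νhk x = 0 := by
      have := h2
      simp only [hf₂def, hρ0, hw] at this
      have h' : -(1 / (2 * (n:ℝ))) *
          ((wσ x) ^ (n + 1) * (νgk x - νgh x) - (wσ x) ^ (n + 1) * νhk x) = 0 := by
        linarith [this]
      rcases mul_eq_zero.mp h' with h | h
      · exact absurd h (by simpa using hc0)
      · exact h
    have : νgk x = νgh x + νhk x := by
      have : (wσ x) ^ (n + 1) * (νgk x - νgh x - νhk x) = 0 := by linarith [hsum]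
      rcases mul_eq_zero.mp this with h | h
      · exact absurd h hpow
      · linarith
    rw [this]; ring
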